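/- arXiv:1607.06901 — 2 statements merged into one kernel-verified Lean document; each statement's English description precedes it below -/
import Mathlib

section
/- Let L be a chain (a linearly ordered set, regarded as a lattice with ⊔ = max and ⊓ = min) and θ a congruence of L. Then the following are equivalent: (i) θ is a prime congruence of L; (ii) θ is a maximal congruence of L; (iii) θ has exactly two equivalence classes. -/
/-- A lattice congruence: an equivalence relation compatible with `⊔` and `⊓`. -/
def IsLatCon {L : Type*} [Lattice L] (θ : L → L → Prop) : Prop :=
  Equivalence θ ∧ (∀ a b c d, θ a b → θ c d → θ (a ⊔ c) (b ⊔ d)) ∧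
    (∀ a b c d, θ a b → θ c d → θ (a ⊓ c) (b ⊓ d))

/-- A maximal congruence: a maximal element of the proper congruences under inclusion. -/
def IsMaxCon {L : Type*} [Lattice L] (θ : L → L → Prop) : Prop :=
  IsLatCon θ ∧ θ ≠ (fun _ _ => True) ∧
    ∀ φ : L → L → Prop, IsLatCon φ → (∀ a b, θ a b → φ a b) →
      φ = θ ∨ φ = (fun _ _ => True)

/-- A prime congruence: proper, and `α ∩ β ⊆ θ` implies `α ⊆ θ` or `β ⊆ θ`. -/
def IsPrimeCon {L : Type*} [Lattice L] (θ : L → L → Prop) : Prop :=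
  IsLatCon θ ∧ θ ≠ (fun _ _ => True) ∧
    ∀ α β : L → L → Prop, IsLatCon α → IsLatCon β →
      (∀ a b, α a b → β a b → θ a b) →
      (∀ a b, α a b → θ a b) ∨ (∀ a b, β a b → θ a b)

/-! A congruence with two classes is maximal for trivial reasons. On a chain, the partition of `L`
into an upper set `s` and its complement is a prime congruence: if `α` and `β` each identify a pair
straddling the cut, then by convexity of classes both identify the larger of the two lower points
with the smaller of the two upper ones. A maximal `θ` lies below the cut by `{x | x ≡ x ⊔ q}`, for
any `q` outside the class of some `p ≤ q`, hence equals it. A prime `θ` has no three classes: for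
`p ≤ q ≤ r` in distinct classes, the pullbacks of `θ` along `· ⊔ q` and `· ⊓ q` both escape `θ`,
while by distributivity their intersection lies in `θ`. -/

lemma ne_fun_true_iff {α : Type*} {θ : α → α → Prop} :
    θ ≠ (fun _ _ => True) ↔ ∃ a b, ¬θ a b := by
  simp [funext_iff]

def HasTwoClasses {α : Type*} (θ : α → α → Prop) : Prop :=
  ∃ a b, ¬θ a b ∧ ∀ x, θ x a ∨ θ x b

lemma Cardinal.mk_quot_eq_two_iff {α : Type*} {θ : α → α → Prop} (hθ : Equivalence θ) :
    Cardinal.mk (Quot θ) = 2 ↔ HasTwoClasses θ := by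
  rw [Cardinal.mk_eq_two_iff]
  constructor
  · rintro ⟨u, v, huv, huniv⟩
    induction u using Quot.ind with | _ a => ?_
    induction v using Quot.ind with | _ b => ?_
    refine ⟨a, b, fun h => huv (Quot.sound h), fun x => ?_⟩
    have hx : Quot.mk θ x ∈ ({Quot.mk θ a, Quot.mk θ b} : Set (Quot θ)) := huniv ▸ Set.mem_univ _
    simpa [hθ.quot_mk_eq_iff] using hx
  · rintro ⟨a, b, hab, hcover⟩
    refine ⟨Quot.mk θ a, Quot.mk θ b, by simpa [hθ.quot_mk_eq_iff] using hab,
      Set.eq_univ_of_forall (Quot.ind fun x => ?_)⟩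
    simpa [hθ.quot_mk_eq_iff] using hcover x

section Lattice

variable {K L : Type*} [Lattice K] [Lattice L] {θ : L → L → Prop}

lemma HasTwoClasses.isMaxCon (h : HasTwoClasses θ) (hθ : IsLatCon θ) : IsMaxCon θ := by
  obtain ⟨a, b, hab, hcover⟩ := h
  refine ⟨hθ, ne_fun_true_iff.2 ⟨a, b, hab⟩, fun φ hφ hθφ => ?_⟩
  by_cases hφθ : ∀ x y, φ x y → θ x y
  · exact .inl (funext₂ fun x y => propext ⟨hφθ x y, hθφ x y⟩)
  push Not at hφθ
  obtain ⟨c, d, hcd, hncd⟩ := hφθ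
  have hφab : φ a b := by
    rcases hcover c with hc | hc <;> rcases hcover d with hd | hd
    · exact absurd (hθ.1.trans hc (hθ.1.symm hd)) hncd
    · exact hφ.1.trans (hφ.1.symm (hθφ _ _ hc)) (hφ.1.trans hcd (hθφ _ _ hd))
    · exact hφ.1.trans (hφ.1.symm (hθφ _ _ hd)) (hφ.1.trans (hφ.1.symm hcd) (hθφ _ _ hc))
    · exact absurd (hθ.1.trans hc (hθ.1.symm hd)) hncd
  have hφa : ∀ x, φ x a := fun x =>
    (hcover x).elim (hθφ _ _) fun h => hφ.1.trans (hθφ _ _ h) (hφ.1.symm hφab)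
  exact .inr (funext₂ fun x y => eq_true (hφ.1.trans (hφa x) (hφ.1.symm (hφa y))))

lemma IsLatCon.comap (hθ : IsLatCon θ) (f : LatticeHom K L) :
    IsLatCon (fun a b => θ (f a) (f b)) :=
  ⟨⟨fun _ => hθ.1.refl _, hθ.1.symm, hθ.1.trans⟩,
    fun a b c d h h' => by simpa only [map_sup] using hθ.2.1 _ _ _ _ h h',
    fun a b c d h h' => by simpa only [map_inf] using hθ.2.2 _ _ _ _ h h'⟩

lemma IsLatCon.rel_of_le_of_le (hθ : IsLatCon θ) {a b x y : L} (hab : θ a b) (hax : a ≤ x)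
    (hxy : x ≤ y) (hyb : y ≤ b) : θ x y := by
  have hxb := hθ.2.1 a b x x hab (hθ.1.refl x)
  rw [sup_eq_right.2 hax, sup_eq_left.2 (hxy.trans hyb)] at hxb
  have hxy' := hθ.2.2 x b y y hxb (hθ.1.refl y)
  rwa [inf_eq_left.2 hxy, inf_eq_right.2 hyb] at hxy'

lemma IsLatCon.rel_sup_iff_of_rel (hθ : IsLatCon θ) (q : L) {a b : L} (hab : θ a b) :
    θ a (a ⊔ q) ↔ θ b (b ⊔ q) := by
  have hq := hθ.2.1 a b q q hab (hθ.1.refl q)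
  exact ⟨fun ha => hθ.1.trans (hθ.1.trans (hθ.1.symm hab) ha) hq,
    fun hb => hθ.1.trans (hθ.1.trans hab hb) (hθ.1.symm hq)⟩

lemma IsLatCon.isUpperSet_setOf_rel_sup (hθ : IsLatCon θ) (q : L) :
    IsUpperSet {x | θ x (x ⊔ q)} := by
  intro x y hxy hx
  have hy := hθ.2.1 x (x ⊔ q) y y hx (hθ.1.refl y)
  rwa [sup_eq_right.2 hxy, sup_right_comm, sup_eq_right.2 hxy] at hy

end Lattice

section DistribLattice

variable {L : Type*} [DistribLattice L] {θ : L → L → Prop}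

lemma IsLatCon.comap_sup (hθ : IsLatCon θ) (q : L) :
    IsLatCon (fun a b => θ (a ⊔ q) (b ⊔ q)) :=
  hθ.comap ⟨⟨(· ⊔ q), fun a b => sup_sup_distrib_right a b q⟩, fun a b => sup_inf_right a b q⟩

lemma IsLatCon.comap_inf (hθ : IsLatCon θ) (q : L) :
    IsLatCon (fun a b => θ (a ⊓ q) (b ⊓ q)) :=
  hθ.comap ⟨⟨(· ⊓ q), fun a b => inf_sup_right a b q⟩, fun a b => inf_inf_distrib_right a b q⟩

-- a = a ⊔ (a ⊓ c) ≡ a ⊔ (b ⊓ c) = (a ⊔ b) ⊓ (a ⊔ c) ≡ (a ⊔ b) ⊓ (b ⊔ c) = b ⊔ (a ⊓ c) ≡ b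
lemma IsLatCon.rel_of_rel_sup_of_rel_inf (hθ : IsLatCon θ) {a b c : L}
    (hsup : θ (a ⊔ c) (b ⊔ c)) (hinf : θ (a ⊓ c) (b ⊓ c)) : θ a b := by
  have h₁ := hθ.2.1 a a _ _ (hθ.1.refl a) hinf
  have h₂ := hθ.2.2 (a ⊔ b) (a ⊔ b) _ _ (hθ.1.refl _) hsup
  have h₃ := hθ.2.1 b b _ _ (hθ.1.refl b) (hθ.1.symm hinf)
  have hdistrib : (a ⊔ b) ⊓ (b ⊔ c) = b ⊔ a ⊓ c := by rw [sup_comm a b, sup_inf_left]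
  rw [sup_inf_self, sup_inf_left] at h₁
  rw [hdistrib] at h₂
  rw [sup_inf_self] at h₃
  exact hθ.1.trans h₁ (hθ.1.trans h₂ (hθ.1.symm h₃))

lemma IsPrimeCon.rel_or_rel_of_le_of_le (h : IsPrimeCon θ) {p q r : L} (hpq : p ≤ q)
    (hqr : q ≤ r) : θ p q ∨ θ q r := by
  obtain ⟨hθ, -, hprime⟩ := h
  refine (hprime _ _ (hθ.comap_sup q) (hθ.comap_inf q)
    fun a b => hθ.rel_of_rel_sup_of_rel_inf).imp (fun h => h p q ?_) (fun h => h q r ?_)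
  · rw [sup_eq_right.2 hpq, sup_idem]
    exact hθ.1.refl q
  · rw [inf_idem, inf_eq_right.2 hqr]
    exact hθ.1.refl q

end DistribLattice

def cutRel {α : Type*} (s : Set α) (x y : α) : Prop :=
  x ∈ s ↔ y ∈ s

lemma hasTwoClasses_cutRel {α : Type*} {s : Set α} {a b : α} (ha : a ∉ s) (hb : b ∈ s) :
    HasTwoClasses (cutRel s) :=
  ⟨a, b, by simp [cutRel, ha, hb], fun x => by by_cases hx : x ∈ s <;> simp [cutRel, ha, hb, hx]⟩

section LinearOrder

variable {L : Type*} [LinearOrder L] {θ : L → L → Prop}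

lemma IsPrimeCon.hasTwoClasses (h : IsPrimeCon θ) : HasTwoClasses θ := by
  obtain ⟨a, b, hab⟩ := ne_fun_true_iff.1 h.2.1
  have hsymm : ∀ {x y}, θ x y → θ y x := h.1.1.symm
  wlog hle : a ≤ b generalizing a b
  · exact this b a (fun h => hab (hsymm h)) (le_of_not_ge hle)
  refine ⟨a, b, hab, fun x => ?_⟩
  rcases le_total x a with hxa | hax
  · exact .inl ((h.rel_or_rel_of_le_of_le hxa hle).resolve_right hab)
  rcases le_total x b with hxb | hbx
  · exact (h.rel_or_rel_of_le_of_le hax hxb).imp_left hsymm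
  · exact .inr (hsymm ((h.rel_or_rel_of_le_of_le hle hbx).resolve_left hab))

lemma isLatCon_ker_of_monotone {M : Type*} [Lattice M] {f : L → M} (hf : Monotone f) :
    IsLatCon (fun x y => f x = f y) :=
  ⟨⟨fun _ => rfl, Eq.symm, Eq.trans⟩,
    fun a b c d (h : f a = f b) (h' : f c = f d) => by
      simp only [hf.map_sup, h, h'],
    fun a b c d (h : f a = f b) (h' : f c = f d) => by
      simp only [hf.map_inf, h, h']⟩

lemma isLatCon_cutRel {s : Set L} (hs : IsUpperSet s) : IsLatCon (cutRel s) := by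
  have hker := isLatCon_ker_of_monotone (f := (· ∈ s)) hs
  simp only [eq_iff_iff] at hker
  exact hker

lemma isPrimeCon_cutRel {s : Set L} (hs : IsUpperSet s) {a b : L} (ha : a ∉ s) (hb : b ∈ s) :
    IsPrimeCon (cutRel s) := by
  refine ⟨isLatCon_cutRel hs, ne_fun_true_iff.2 ⟨a, b, by simp [cutRel, ha, hb]⟩,
    fun α β hα hβ hαβ => ?_⟩
  have escape : ∀ {γ : L → L → Prop}, IsLatCon γ → (∃ a b, γ a b ∧ ¬cutRel s a b) →
      ∃ x ∉ s, ∃ y ∈ s, γ x y := by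
    rintro γ hγ ⟨a, b, hab, hn⟩
    by_cases ha : a ∈ s
    · exact ⟨b, fun hb => hn (iff_of_true ha hb), a, ha, hγ.1.symm hab⟩
    · exact ⟨a, ha, b, by_contra fun hb => hn (iff_of_false ha hb), hab⟩
  have le_of_notMem_of_mem : ∀ {x y}, x ∉ s → y ∈ s → x ≤ y := fun hx hy =>
    le_of_not_ge fun h => hx (hs h hy)
  by_contra! hcross
  obtain ⟨x, hx, y, hy, hαxy⟩ := escape hα hcross.1
  obtain ⟨c, hc, d, hd, hβcd⟩ := escape hβ hcross.2
  have hm : x ⊔ c ∉ s := sup_ind (p := (· ∉ s)) x c hx hc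
  have hn : y ⊓ d ∈ s := inf_ind (p := (· ∈ s)) y d hy hd
  have hmn := le_of_notMem_of_mem hm hn
  refine hm ((hαβ _ _ ?_ ?_).2 hn)
  · exact hα.rel_of_le_of_le hαxy le_sup_left hmn inf_le_left
  · exact hβ.rel_of_le_of_le hβcd le_sup_right hmn inf_le_right

-- `{x | θ x (x ⊔ q)}` is the union of the classes lying above the class of `q` in `L/θ`.
lemma IsMaxCon.exists_eq_cutRel (h : IsMaxCon θ) :
    ∃ s : Set L, IsUpperSet s ∧ ∃ a ∉ s, ∃ b ∈ s, θ = cutRel s := by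
  obtain ⟨hθ, hne, hmax⟩ := h
  obtain ⟨p, q, hpq⟩ := ne_fun_true_iff.1 hne
  wlog hle : p ≤ q generalizing p q
  · exact this q p (fun h => hpq (hθ.1.symm h)) (le_of_not_ge hle)
  set s := {x | θ x (x ⊔ q)}
  have hs : IsUpperSet s := hθ.isUpperSet_setOf_rel_sup q
  have hp : p ∉ s := by simpa [s, sup_eq_right.2 hle] using hpq
  have hq : q ∈ s := by simpa [s] using hθ.1.refl q
  rcases hmax (cutRel s) (isLatCon_cutRel hs) (fun a b => hθ.rel_sup_iff_of_rel q) with h | h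
  · exact ⟨s, hs, p, hp, q, hq, h.symm⟩
  · exact absurd (of_eq_true (congrFun₂ h p q)) fun h => hp (h.2 hq)

end LinearOrder

/-- In a chain, a congruence is prime iff it is maximal iff it has
exactly two classes. -/
theorem primeCon_iff_maxCon_iff_two_classes_chain
    {L : Type*} [LinearOrder L] (θ : L → L → Prop) (hθ : IsLatCon θ) :
    (IsPrimeCon θ ↔ IsMaxCon θ) ∧ (IsMaxCon θ ↔ Cardinal.mk (Quot θ) = 2) := by
  have of_max : IsMaxCon θ → IsPrimeCon θ ∧ HasTwoClasses θ := fun h => by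
    obtain ⟨s, hs, a, ha, b, hb, rfl⟩ := h.exists_eq_cutRel
    exact ⟨isPrimeCon_cutRel hs ha hb, hasTwoClasses_cutRel ha hb⟩
  rw [Cardinal.mk_quot_eq_two_iff hθ.1]
  exact ⟨⟨fun h => h.hasTwoClasses.isMaxCon hθ, fun h => (of_max h).1⟩,
    fun h => (of_max h).2, fun h => h.isMaxCon hθ⟩
end

section
/- Let L be a lattice which is either finite and modular, or relatively complemented and satisfying the ascending chain condition (no infinite strictly increasing chain). Then a congruence of L is prime if and only if it is maximal. -/
section

open Function Relation

variable {L M : Type*} [Lattice L] [Lattice M]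

theorem Relation.EqvGen.lift {α β : Type*} {r : α → α → Prop} {p : β → β → Prop} (f : α → β)
    (h : ∀ a b, r a b → p (f a) (f b)) {a b : α} (hab : EqvGen r a b) :
    EqvGen p (f a) (f b) := by
  induction hab with
  | rel a b hab => exact .rel _ _ (h a b hab)
  | refl => exact .refl _
  | symm _ _ _ ih => exact .symm _ _ ih
  | trans _ _ _ _ _ ih₁ ih₂ => exact .trans _ _ _ ih₁ ih₂

namespace IsLatCon

variable {θ α β : L → L → Prop}

theorem refl (hθ : IsLatCon θ) (a : L) : θ a a := hθ.1.refl a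

theorem symm (hθ : IsLatCon θ) {a b : L} (h : θ a b) : θ b a := hθ.1.symm h

theorem trans (hθ : IsLatCon θ) {a b c : L} (h₁ : θ a b) (h₂ : θ b c) : θ a c :=
  hθ.1.trans h₁ h₂

theorem sup_right (hθ : IsLatCon θ) (t : L) {a b : L} (h : θ a b) : θ (a ⊔ t) (b ⊔ t) :=
  hθ.2.1 a b t t h (hθ.refl t)

theorem inf_right (hθ : IsLatCon θ) (t : L) {a b : L} (h : θ a b) : θ (a ⊓ t) (b ⊓ t) :=
  hθ.2.2 a b t t h (hθ.refl t)

theorem of_translations (he : Equivalence θ) (hsup : ∀ t a b, θ a b → θ (a ⊔ t) (b ⊔ t))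
    (hinf : ∀ t a b, θ a b → θ (a ⊓ t) (b ⊓ t)) : IsLatCon θ := by
  refine ⟨he, fun a b c d hab hcd => he.trans (hsup c a b hab) ?_,
    fun a b c d hab hcd => he.trans (hinf c a b hab) ?_⟩
  · simpa only [sup_comm b] using hsup b c d hcd
  · simpa only [inf_comm b] using hinf b c d hcd

theorem of_subinterval (hθ : IsLatCon θ) {u v x y : L} (h : θ u v) (hux : u ≤ x) (hxy : x ≤ y)
    (hyv : y ≤ v) : θ x y := by
  have hx : θ x v := by
    simpa only [sup_eq_right.2 hux, sup_eq_left.2 (hxy.trans hyv)] using hθ.sup_right x h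
  have hy : θ y v := by
    simpa only [sup_eq_right.2 (hux.trans hxy), sup_eq_left.2 hyv] using hθ.sup_right y h
  exact hθ.trans hx (hθ.symm hy)

theorem inf_sup (hθ : IsLatCon θ) {x y : L} (h : θ x y) : θ (x ⊓ y) (x ⊔ y) := by
  have hinf : θ (x ⊓ y) y := by simpa only [inf_idem] using hθ.inf_right y h
  have hsup : θ (x ⊔ y) y := by simpa only [sup_idem] using hθ.sup_right y h
  exact hθ.trans hinf (hθ.symm hsup)

theorem of_inf_sup (hθ : IsLatCon θ) {x y : L} (h : θ (x ⊓ y) (x ⊔ y)) : θ x y :=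
  hθ.trans (hθ.of_subinterval h inf_le_left le_sup_left le_rfl)
    (hθ.symm (hθ.of_subinterval h inf_le_right le_sup_right le_rfl))

theorem inter (hα : IsLatCon α) (hβ : IsLatCon β) : IsLatCon fun a b => α a b ∧ β a b :=
  ⟨⟨fun a => ⟨hα.refl a, hβ.refl a⟩, fun h => ⟨hα.symm h.1, hβ.symm h.2⟩,
    fun h₁ h₂ => ⟨hα.trans h₁.1 h₂.1, hβ.trans h₁.2 h₂.2⟩⟩,
    fun a b c d h₁ h₂ => ⟨hα.2.1 a b c d h₁.1 h₂.1, hβ.2.1 a b c d h₁.2 h₂.2⟩,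
    fun a b c d h₁ h₂ => ⟨hα.2.2 a b c d h₁.1 h₂.1, hβ.2.2 a b c d h₁.2 h₂.2⟩⟩

theorem comap_s11 {ρ : M → M → Prop} (hρ : IsLatCon ρ) (f : LatticeHom L M) :
    IsLatCon fun a b => ρ (f a) (f b) :=
  ⟨⟨fun a => hρ.refl (f a), hρ.symm, hρ.trans⟩,
    fun a b c d h₁ h₂ => by simpa only [map_sup] using hρ.2.1 _ _ _ _ h₁ h₂,
    fun a b c d h₁ h₂ => by simpa only [map_inf] using hρ.2.2 _ _ _ _ h₁ h₂⟩

theorem of_comap {ρ : M → M → Prop} {f : LatticeHom L M} (hf : Surjective f)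
    (hρ : IsLatCon fun a b => ρ (f a) (f b)) : IsLatCon ρ := by
  refine ⟨⟨hf.forall.2 hρ.refl, fun {X Y} => ?_, fun {X Y Z} => ?_⟩,
    hf.forall₂.2 fun a b => hf.forall₂.2 fun c d => ?_,
    hf.forall₂.2 fun a b => hf.forall₂.2 fun c d => ?_⟩
  · obtain ⟨x, rfl⟩ := hf X; obtain ⟨y, rfl⟩ := hf Y
    exact hρ.symm
  · obtain ⟨x, rfl⟩ := hf X; obtain ⟨y, rfl⟩ := hf Y; obtain ⟨z, rfl⟩ := hf Z
    exact hρ.trans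
  · simpa only [map_sup] using hρ.2.1 a b c d
  · simpa only [map_inf] using hρ.2.2 a b c d

theorem eqvGen_le (hθ : IsLatCon θ) {R : L → L → Prop} (h : ∀ a b, R a b → θ a b) {a b : L}
    (hab : EqvGen R a b) : θ a b :=
  haveI := hθ.1.isEquiv
  EqvGen.eqvGen_le h a b hab

end IsLatCon

theorem isLatCon_eq : IsLatCon (@Eq L) :=
  ⟨eq_equivalence, fun _ _ _ _ h₁ h₂ => h₁ ▸ h₂ ▸ rfl, fun _ _ _ _ h₁ h₂ => h₁ ▸ h₂ ▸ rfl⟩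

theorem isLatCon_eqvGen {R : L → L → Prop} (hsup : ∀ t a b, R a b → R (a ⊔ t) (b ⊔ t))
    (hinf : ∀ t a b, R a b → R (a ⊓ t) (b ⊓ t)) : IsLatCon (EqvGen R) :=
  .of_translations (EqvGen.is_equivalence R)
    (fun t _ _ h => h.lift (· ⊔ t) (hsup t)) (fun t _ _ h => h.lift (· ⊓ t) (hinf t))

def joinCon (α β : L → L → Prop) : L → L → Prop := EqvGen fun a b => α a b ∨ β a b

section Join

variable {α β γ : L → L → Prop}

theorem isLatCon_joinCon (hα : IsLatCon α) (hβ : IsLatCon β) : IsLatCon (joinCon α β) :=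
  isLatCon_eqvGen (fun t _ _ h => h.imp (hα.sup_right t) (hβ.sup_right t))
    (fun t _ _ h => h.imp (hα.inf_right t) (hβ.inf_right t))

/-- Distributivity of the congruence lattice (Funayama–Nakayama). -/
theorem inf_joinCon_le (hγ : IsLatCon γ) (hα : IsLatCon α) (hβ : IsLatCon β) {x y : L}
    (hγxy : γ x y) (hxy : joinCon α β x y) :
    joinCon (fun a b => γ a b ∧ α a b) (fun a b => γ a b ∧ β a b) x y := by
  set u := x ⊓ y
  set v := x ⊔ y
  -- Projecting a chain from `u` to `v` into `[u, v]` keeps it inside one `γ`-class.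
  let π : L → L := fun z => (z ⊔ u) ⊓ v
  have hγπ : ∀ z, γ (π z) v := fun z =>
    hγ.of_subinterval (hγ.inf_sup hγxy) (le_inf le_sup_right inf_le_sup) inf_le_right le_rfl
  have hπ : joinCon (fun a b => γ a b ∧ α a b) (fun a b => γ a b ∧ β a b) (π u) (π v) := by
    refine ((isLatCon_joinCon hα hβ).inf_sup hxy).lift π fun z z' hzz' => ?_
    have hγzz' := hγ.trans (hγπ z) (hγ.symm (hγπ z'))
    exact hzz'.imp (fun h => ⟨hγzz', hα.inf_right v (hα.sup_right u h)⟩)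
      (fun h => ⟨hγzz', hβ.inf_right v (hβ.sup_right u h)⟩)
  have hπu : π u = u := by simp only [π, sup_idem]; exact inf_eq_left.2 inf_le_sup
  have hπv : π v = v := by simp only [π]; rw [sup_eq_left.2 (inf_le_sup : u ≤ v), inf_idem]
  rw [hπu, hπv] at hπ
  exact (isLatCon_joinCon (hγ.inter hα) (hγ.inter hβ)).of_inf_sup hπ

end Join

theorem IsMaxCon.joinCon_total {θ γ : L → L → Prop} (hθ : IsMaxCon θ) (hγ : IsLatCon γ) {a b : L}
    (hγab : γ a b) (hθab : ¬θ a b) (x y : L) : joinCon θ γ x y := by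
  rcases hθ.2.2 _ (isLatCon_joinCon hθ.1 hγ) (fun _ _ h => .rel _ _ (.inl h)) with h | h
  · exact absurd (h ▸ .rel _ _ (.inr hγab)) hθab
  · exact h ▸ trivial

theorem IsMaxCon.isPrimeCon {θ : L → L → Prop} (hθ : IsMaxCon θ) : IsPrimeCon θ := by
  refine ⟨hθ.1, hθ.2.1, fun α β hα hβ hαβ => ?_⟩
  by_contra! hcon
  obtain ⟨⟨a, b, hαab, hθab⟩, ⟨c, d, hβcd, hθcd⟩⟩ := hcon
  -- `∇ = (θ ∨ β) ∧ (θ ∨ α) ≤ θ ∨ (α ∧ (θ ∨ β)) ≤ θ ∨ (α ∧ θ) ∨ (α ∧ β) ≤ θ`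
  have hα_le : ∀ u v, α u v → joinCon θ β u v → θ u v := fun u v hαuv hβuv =>
    hθ.1.eqvGen_le (fun _ _ h => h.elim And.right fun h => hαβ _ _ h.1 h.2)
      (inf_joinCon_le hα hθ.1 hβ hαuv hβuv)
  refine hθ.2.1 (funext₂ fun x y => eq_true ?_)
  exact hθ.1.eqvGen_le (fun u v h => h.elim And.right fun h => hα_le u v h.2 h.1)
    (inf_joinCon_le (isLatCon_joinCon hθ.1 hβ) hθ.1 hα (hθ.joinCon_total hβ hβcd hθcd x y)
      (hθ.joinCon_total hα hαab hθab x y))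

inductive IsTranslate (a b : L) : L → L → Prop
  | refl : IsTranslate a b a b
  | sup {p q : L} (t : L) : IsTranslate a b p q → IsTranslate a b (p ⊔ t) (q ⊔ t)
  | inf {p q : L} (t : L) : IsTranslate a b p q → IsTranslate a b (p ⊓ t) (q ⊓ t)

theorem IsTranslate.le {a b p q : L} (hab : a ≤ b) (h : IsTranslate a b p q) : p ≤ q := by
  induction h with
  | refl => exact hab
  | sup t _ ih => exact sup_le_sup_right ih t
  | inf t _ ih => exact inf_le_inf_right t ih

theorem IsLatCon.of_isTranslate {θ : L → L → Prop} (hθ : IsLatCon θ) {a b p q : L} (hab : θ a b)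
    (h : IsTranslate a b p q) : θ p q := by
  induction h with
  | refl => exact hab
  | sup t _ ih => exact hθ.sup_right t ih
  | inf t _ ih => exact hθ.inf_right t ih

def princCon (a b : L) : L → L → Prop := EqvGen (IsTranslate a b)

theorem isLatCon_princCon (a b : L) : IsLatCon (princCon a b) :=
  isLatCon_eqvGen (fun t _ _ => .sup t) (fun t _ _ => .inf t)

theorem princCon_self (a b : L) : princCon a b a b := .rel _ _ .refl

theorem IsLatCon.princCon_le {θ : L → L → Prop} (hθ : IsLatCon θ) {a b x y : L} (hab : θ a b)
    (h : princCon a b x y) : θ x y :=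
  hθ.eqvGen_le (fun _ _ => hθ.of_isTranslate hab) h

theorem CovBy.isTranslate_of_princCon {a b c d : L} (hab : a ≤ b) (hcd : c ⋖ d)
    (h : princCon a b c d) : IsTranslate a b c d := by
  by_contra hnot
  -- Projected into `[c, d] = {c, d}`, a chain of translates of `(a, b)` never steps from `c`
  -- to `d`.
  let π : L → L := fun z => (z ⊔ c) ⊓ d
  have hπ : ∀ z, π z = c ∨ π z = d := fun z =>
    hcd.eq_or_eq (le_inf le_sup_right hcd.le) inf_le_right
  have hinv : ∀ x y, princCon a b x y → (π x = c ↔ π y = c) := by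
    intro x y hxy
    induction hxy with
    | rel x y hxy =>
      have hπxy : IsTranslate a b (π x) (π y) := (hxy.sup c).inf d
      rcases hπ x with hx | hx <;> rcases hπ y with hy | hy <;> rw [hx, hy] at hπxy ⊢
      · exact (hnot hπxy).elim
      · exact absurd (hπxy.le hab) hcd.lt.not_ge
    | refl => rfl
    | symm _ _ _ ih => exact ih.symm
    | trans _ _ _ _ _ ih₁ ih₂ => exact ih₁.trans ih₂
  have hπc : π c = c := by simp only [π, sup_idem]; exact inf_eq_left.2 hcd.le
  have hπd : π d = d := by simp only [π]; rw [sup_eq_left.2 hcd.le, inf_idem]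
  exact hcd.ne' (hπd ▸ (hinv c d h).1 hπc)

def CollapsesIn (ψ : L → L → Prop) (p q : L) : Prop := ∃ r s, p ≤ r ∧ r < s ∧ s ≤ q ∧ ψ r s

theorem CovBy.collapsesIn_iff {ψ : L → L → Prop} {a b : L} (hab : a ⋖ b) :
    CollapsesIn ψ a b ↔ ψ a b := by
  refine ⟨fun ⟨r, s, har, hrs, hsb, h⟩ => ?_, fun h => ⟨a, b, le_rfl, hab.lt, le_rfl, h⟩⟩
  obtain rfl : r = a := (hab.eq_or_eq har (hrs.le.trans hsb)).resolve_right
    (by rintro rfl; exact hrs.not_ge hsb)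
  obtain rfl : s = b := (hab.eq_or_eq hrs.le hsb).resolve_left hrs.ne'
  exact h

def HasCollapseDescent (L : Type*) [Lattice L] : Prop :=
  ∀ ψ : L → L → Prop, IsLatCon ψ → ∀ p q t : L, p ≤ q →
    (CollapsesIn ψ (p ⊔ t) (q ⊔ t) → CollapsesIn ψ p q) ∧
      (CollapsesIn ψ (p ⊓ t) (q ⊓ t) → CollapsesIn ψ p q)

theorem HasCollapseDescent.of_isTranslate (hL : HasCollapseDescent L) {ψ : L → L → Prop}
    (hψ : IsLatCon ψ) {a b p q : L} (hab : a ≤ b) (h : IsTranslate a b p q)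
    (hpq : CollapsesIn ψ p q) : CollapsesIn ψ a b := by
  induction h with
  | refl => exact hpq
  | sup t h ih => exact ih ((hL ψ hψ _ _ t (h.le hab)).1 hpq)
  | inf t h ih => exact ih ((hL ψ hψ _ _ t (h.le hab)).2 hpq)

theorem HasCollapseDescent.princCon_symm_of_covBy (hL : HasCollapseDescent L) {a b c d : L}
    (hab : a ⋖ b) (hcd : c ⋖ d) (h : princCon a b c d) : princCon c d a b :=
  hab.collapsesIn_iff.1 <| hL.of_isTranslate (isLatCon_princCon c d) hab.le
    (hcd.isTranslate_of_princCon hab.le h) (hcd.collapsesIn_iff.2 (princCon_self c d))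

theorem hasCollapseDescent_of_isModularLattice [IsModularLattice L] : HasCollapseDescent L := by
  intro ψ hψ p q t hpq
  constructor
  · rintro ⟨r, s, hr, hrs, hs, hψrs⟩
    refine ⟨r ⊓ q, s ⊓ q, le_inf (le_sup_left.trans hr) hpq,
      (inf_le_inf_right q hrs.le).lt_of_ne fun heq => hrs.ne ?_, inf_le_right, hψ.inf_right q hψrs⟩
    have hsrq : s ≤ r ⊔ q :=
      hs.trans (sup_le le_sup_right ((le_sup_right.trans hr).trans le_sup_left))
    calc r = r ⊔ r ⊓ q := sup_inf_self.symm
      _ = r ⊔ s ⊓ q := by rw [heq]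
      _ = (r ⊔ q) ⊓ s := by rw [inf_comm s, sup_inf_assoc_of_le q hrs.le]
      _ = s := inf_eq_right.2 hsrq
  · rintro ⟨r, s, hr, hrs, hs, hψrs⟩
    refine ⟨r ⊔ p, s ⊔ p, le_sup_right,
      (sup_le_sup_right hrs.le p).lt_of_ne fun heq => hrs.ne ?_, sup_le (hs.trans inf_le_left) hpq,
      hψ.sup_right p hψrs⟩
    have hpsr : p ⊓ s ≤ r := (inf_le_inf_left p (hs.trans inf_le_right)).trans hr
    calc r = r ⊔ p ⊓ s := (sup_eq_left.2 hpsr).symm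
      _ = (r ⊔ p) ⊓ s := (sup_inf_assoc_of_le p hrs.le).symm
      _ = s := by rw [heq, inf_eq_right.2 le_sup_left]

def IsRelativelyComplemented (L : Type*) [Lattice L] : Prop :=
  ∀ a x b : L, a ≤ x → x ≤ b → ∃ y, x ⊓ y = a ∧ x ⊔ y = b

theorem IsRelativelyComplemented.hasCollapseDescent (hL : IsRelativelyComplemented L) :
    HasCollapseDescent L := by
  intro ψ hψ p q t hpq
  constructor
  · rintro ⟨r, s, hr, hrs, hs, hψrs⟩
    have hsqr : s ≤ q ⊔ r :=
      hs.trans (sup_le le_sup_left ((le_sup_right.trans hr).trans le_sup_right))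
    obtain ⟨c, hsc, hsc'⟩ := hL r s (q ⊔ r) hrs.le hsqr
    have hrc : r ≤ c := hsc ▸ inf_le_right
    have hψc : ψ c (q ⊔ r) := by simpa only [sup_eq_right.2 hrc, hsc'] using hψ.sup_right c hψrs
    refine ⟨c ⊓ q, q, le_inf ((le_sup_left.trans hr).trans hrc) hpq,
      inf_le_right.lt_of_ne fun heq => hrs.ne ?_, le_rfl, ?_⟩
    · have hcqr : c = q ⊔ r := le_antisymm (hsc' ▸ le_sup_right) (sup_le (heq ▸ inf_le_left) hrc)
      rw [← hsc]
      exact inf_eq_left.2 (hsqr.trans hcqr.ge)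
    · simpa only [inf_eq_right.2 (le_sup_left : q ≤ q ⊔ r)] using hψ.inf_right q hψc
  · rintro ⟨r, s, hr, hrs, hs, hψrs⟩
    have hpsr : p ⊓ s ≤ r := (inf_le_inf_left p (hs.trans inf_le_right)).trans hr
    obtain ⟨c, hrc, hrc'⟩ := hL (p ⊓ s) r s hpsr hrs.le
    have hcs : c ≤ s := hrc' ▸ le_sup_right
    have hψc : ψ (p ⊓ s) c := by simpa only [hrc, inf_eq_right.2 hcs] using hψ.inf_right c hψrs
    refine ⟨p, c ⊔ p, le_rfl, le_sup_right.lt_of_ne fun heq => hrs.ne ?_,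
      sup_le (hcs.trans (hs.trans inf_le_left)) hpq, ?_⟩
    · have hcr : c ≤ r := (le_inf (heq ▸ le_sup_left) hcs).trans hpsr
      rw [← hrc', sup_eq_left.2 hcr]
    · simpa only [sup_eq_right.2 (inf_le_left : p ⊓ s ≤ p)] using hψ.sup_right p hψc

namespace IsLatCon

variable {φ : L → L → Prop}

theorem exists_covBy [WellFoundedGT L] (hφ : IsLatCon φ) {x y : L} (hne : x ≠ y) (hxy : φ x y) :
    ∃ a b, a ⋖ b ∧ φ a b := by
  obtain ⟨a, ha, hab⟩ := exists_le_covBy_of_lt (inf_lt_sup.2 hne)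
  exact ⟨a, _, hab, hφ.of_subinterval (hφ.inf_sup hxy) ha hab.le le_rfl⟩

theorem of_covBy_of_isPrimeCon_eq [WellFoundedGT L] (hL : HasCollapseDescent L)
    (hprime : IsPrimeCon (@Eq L)) (hφ : IsLatCon φ) {x y : L} (hne : x ≠ y) (hxy : φ x y)
    {c d : L} (hcd : c ⋖ d) : φ c d := by
  obtain ⟨a, b, hab, hφab⟩ := hφ.exists_covBy hne hxy
  have hmeet : ∃ u v, u ≠ v ∧ princCon a b u v ∧ princCon c d u v := by
    by_contra! h
    rcases hprime.2.2 _ _ (isLatCon_princCon a b) (isLatCon_princCon c d)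
      (fun u v h₁ h₂ => by_contra fun huv => h u v huv h₁ h₂) with h' | h'
    · exact hab.ne (h' a b (princCon_self a b))
    · exact hcd.ne (h' c d (princCon_self c d))
  obtain ⟨u, v, huv, habuv, hcduv⟩ := hmeet
  obtain ⟨e, f, hef, habef, hcdef⟩ :=
    ((isLatCon_princCon a b).inter (isLatCon_princCon c d)).exists_covBy huv ⟨habuv, hcduv⟩
  exact hφ.princCon_le (hφ.princCon_le hφab habef) (hL.princCon_symm_of_covBy hcd hef hcdef)

theorem of_forall_le (hφ : IsLatCon φ) (h : ∀ x y, x ≤ y → φ x y) (x y : L) : φ x y :=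
  hφ.trans (h _ _ le_sup_left) (hφ.symm (h _ _ le_sup_right))

theorem of_le_of_forall_covBy [WellFoundedLT L] [WellFoundedGT L] (hφ : IsLatCon φ)
    (hcov : ∀ c d, c ⋖ d → φ c d) {x y : L} (hxy : x ≤ y) : φ x y := by
  induction y using WellFoundedLT.induction with
  | _ y ih =>
    rcases hxy.eq_or_lt with rfl | hlt
    · exact hφ.refl x
    · obtain ⟨z, hxz, hzy⟩ := exists_le_covBy_of_lt hlt
      exact hφ.trans (ih z hzy.lt hxz) (hcov z y hzy)

theorem of_le_of_forall_covBy_of_isRelativelyComplemented [WellFoundedGT L]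
    (hL : IsRelativelyComplemented L) (hφ : IsLatCon φ) (hcov : ∀ c d, c ⋖ d → φ c d)
    {x y : L} (hxy : x ≤ y) : φ x y := by
  suffices ∀ m, x ≤ m → m ≤ y → φ x m → φ x y from this x le_rfl hxy (hφ.refl x)
  intro m
  induction m using WellFoundedGT.induction with
  | _ m ih =>
    intro hxm hmy hφm
    rcases hmy.eq_or_lt with rfl | hlt
    · exact hφm
    obtain ⟨w, hmw, hwy⟩ := exists_le_covBy_of_lt hlt
    -- A relative complement `c` of `w` in `[m, y]` is collapsed onto `m` because `w ⋖ y` is.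
    obtain ⟨c, hwc, hwc'⟩ := hL m w y hmw hwy.le
    have hcy : c ≤ y := hwc' ▸ le_sup_right
    have hmc : m < c := (hwc ▸ inf_le_right : m ≤ c).lt_of_ne <| by
      rintro rfl
      exact hwy.ne (sup_eq_left.2 hmw ▸ hwc')
    have hφmc : φ m c := by
      simpa only [hwc, inf_eq_right.2 hcy] using hφ.inf_right c (hcov w y hwy)
    exact ih c hmc (hxm.trans hmc.le) hcy (hφ.trans hφm hφmc)

end IsLatCon

def IsCongruenceSimple (L : Type*) [Lattice L] : Prop :=
  ∀ φ : L → L → Prop, IsLatCon φ → ∀ x y, x ≠ y → φ x y → ∀ u v, φ u v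

theorem isCongruenceSimple_of_finite [Finite L] (hL : HasCollapseDescent L)
    (hprime : IsPrimeCon (@Eq L)) : IsCongruenceSimple L := fun _ hφ _ _ hne hxy =>
  hφ.of_forall_le fun _ _ => hφ.of_le_of_forall_covBy fun _ _ =>
    hφ.of_covBy_of_isPrimeCon_eq hL hprime hne hxy

theorem IsRelativelyComplemented.isCongruenceSimple [WellFoundedGT L]
    (hL : IsRelativelyComplemented L) (hprime : IsPrimeCon (@Eq L)) : IsCongruenceSimple L :=
  fun _ hφ _ _ hne hxy => hφ.of_forall_le fun _ _ =>
    hφ.of_le_of_forall_covBy_of_isRelativelyComplemented hL fun _ _ =>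
      hφ.of_covBy_of_isPrimeCon_eq hL.hasCollapseDescent hprime hne hxy

theorem Function.Surjective.isModularLattice [IsModularLattice L] {f : LatticeHom L M}
    (hf : Surjective f) : IsModularLattice M := by
  constructor
  intro X Y Z hXZ
  obtain ⟨x, rfl⟩ := hf X; obtain ⟨y, rfl⟩ := hf Y; obtain ⟨z, rfl⟩ := hf Z
  refine le_of_eq ?_
  have hx : f (x ⊓ z) = f x := by rw [map_inf, inf_eq_left.2 hXZ]
  rw [← hx, ← map_sup, ← map_inf, ← map_inf, ← map_sup, sup_inf_assoc_of_le y inf_le_right]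

theorem Function.Surjective.isRelativelyComplemented {f : LatticeHom L M} (hf : Surjective f)
    (hL : IsRelativelyComplemented L) : IsRelativelyComplemented M := by
  refine hf.forall.2 fun a => hf.forall.2 fun x => hf.forall.2 fun b hax hxb => ?_
  obtain ⟨y, hy, hy'⟩ := hL (a ⊓ x) x (b ⊔ x) inf_le_right le_sup_right
  refine ⟨f y, ?_, ?_⟩
  · rw [← map_inf, hy, map_inf, inf_eq_left.2 hax]
  · rw [← map_sup, hy', map_sup, sup_eq_left.2 hxb]

theorem Function.Surjective.wellFoundedGT [WellFoundedGT L] {f : SupHom L M} (hf : Surjective f) :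
    WellFoundedGT M := by
  refine ⟨⟨hf.forall.2 fun x => ?_⟩⟩
  induction x using WellFoundedGT.induction with
  | _ x ih =>
    refine ⟨_, hf.forall.2 fun y hxy => ?_⟩
    have hfy : f (x ⊔ y) = f y := by rw [map_sup, sup_eq_right.2 hxy.le]
    rw [← hfy]
    exact ih _ (le_sup_left.lt_of_ne fun h => hxy.ne ((congrArg f h).trans hfy))

theorem wellFoundedGT_of_not_exists_strictMono (h : ¬∃ f : ℕ → L, StrictMono f) :
    WellFoundedGT L := by
  rw [WellFoundedGT, isWellFounded_iff, RelEmbedding.wellFounded_iff_isEmpty]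
  exact ⟨fun f => h ⟨f, fun _ _ hab => f.map_rel_iff.2 hab⟩⟩

section Quotient

variable {θ : L → L → Prop} (hθ : IsLatCon θ)

def IsLatCon.setoid : Setoid L := ⟨θ, hθ.1⟩

def ConQuotient : Type _ := Quotient hθ.setoid

namespace ConQuotient

instance : Max (ConQuotient hθ) :=
  ⟨Quotient.map₂ (· ⊔ ·) fun _ _ ha _ _ hb => hθ.2.1 _ _ _ _ ha hb⟩

instance : Min (ConQuotient hθ) :=
  ⟨Quotient.map₂ (· ⊓ ·) fun _ _ ha _ _ hb => hθ.2.2 _ _ _ _ ha hb⟩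

instance : Lattice (ConQuotient hθ) :=
  Lattice.mk' (by rintro ⟨a⟩ ⟨b⟩; exact congrArg _ (sup_comm a b))
    (by rintro ⟨a⟩ ⟨b⟩ ⟨c⟩; exact congrArg _ (sup_assoc a b c))
    (by rintro ⟨a⟩ ⟨b⟩; exact congrArg _ (inf_comm a b))
    (by rintro ⟨a⟩ ⟨b⟩ ⟨c⟩; exact congrArg _ (inf_assoc a b c))
    (by rintro ⟨a⟩ ⟨b⟩; exact congrArg _ (sup_inf_self (a := a) (b := b)))
    (by rintro ⟨a⟩ ⟨b⟩; exact congrArg _ (inf_sup_self (a := a) (b := b)))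

instance [Finite L] : Finite (ConQuotient hθ) := Quotient.finite _

def mkHom : LatticeHom L (ConQuotient hθ) where
  toFun := Quotient.mk _
  map_sup' _ _ := rfl
  map_inf' _ _ := rfl

theorem mkHom_surjective : Surjective (mkHom hθ) := Quotient.mk_surjective

theorem mkHom_eq_mkHom {a b : L} : mkHom hθ a = mkHom hθ b ↔ θ a b := Quotient.eq

def liftCon (φ : L → L → Prop) (hφ : IsLatCon φ) (hle : ∀ a b, θ a b → φ a b) :
    ConQuotient hθ → ConQuotient hθ → Prop :=
  Quotient.lift₂ φ fun _ _ _ _ ha hb => propext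
    ⟨fun h => hφ.trans (hφ.symm (hle _ _ ha)) (hφ.trans h (hle _ _ hb)),
      fun h => hφ.trans (hle _ _ ha) (hφ.trans h (hφ.symm (hle _ _ hb)))⟩

theorem isLatCon_liftCon {φ : L → L → Prop} (hφ : IsLatCon φ) (hle : ∀ a b, θ a b → φ a b) :
    IsLatCon (liftCon hθ φ hφ hle) :=
  IsLatCon.of_comap (mkHom_surjective hθ) hφ

end ConQuotient

open ConQuotient

theorem IsPrimeCon.isPrimeCon_eq_conQuotient (hθ : IsPrimeCon θ) :
    IsPrimeCon (@Eq (ConQuotient hθ.1)) := by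
  refine ⟨isLatCon_eq, fun htop => hθ.2.1 ?_, fun α β hα hβ hαβ => ?_⟩
  · exact funext₂ fun a b => eq_true <| (mkHom_eq_mkHom hθ.1).1 <| (congrFun₂ htop _ _).mpr trivial
  · have hsurj := mkHom_surjective hθ.1
    refine (hθ.2.2 _ _ (hα.comap_s11 (mkHom hθ.1)) (hβ.comap_s11 (mkHom hθ.1))
      fun a b ha hb => (mkHom_eq_mkHom hθ.1).1 (hαβ _ _ ha hb)).imp ?_ ?_ <;>
    exact fun h => hsurj.forall₂.2 fun a b hab => (mkHom_eq_mkHom hθ.1).2 (h a b hab)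

theorem IsLatCon.isMaxCon_of_isCongruenceSimple (hne : θ ≠ fun _ _ => True)
    (hsimple : IsCongruenceSimple (ConQuotient hθ)) : IsMaxCon θ := by
  refine ⟨hθ, hne, fun φ hφ hle => ?_⟩
  by_cases h : ∀ a b, φ a b → θ a b
  · exact .inl (funext₂ fun a b => propext ⟨h a b, hle a b⟩)
  push Not at h
  obtain ⟨a, b, hφab, hθab⟩ := h
  refine .inr (funext₂ fun x y => eq_true ?_)
  exact hsimple _ (isLatCon_liftCon hθ hφ hle) (mkHom hθ a) (mkHom hθ b)
    (mt (mkHom_eq_mkHom hθ).1 hθab) hφab (mkHom hθ x) (mkHom hθ y)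

end Quotient

end

/-- In a lattice which is finite and modular, or relatively complemented
and satisfying the ascending chain condition, a congruence is prime iff it is maximal. -/
theorem primeCon_iff_maxCon_of_modular_or_relCompl {L : Type*} [Lattice L]
    (h : (Finite L ∧ IsModularLattice L) ∨
      ((∀ a x b : L, a ≤ x → x ≤ b → ∃ y, x ⊓ y = a ∧ x ⊔ y = b) ∧
        ¬∃ f : ℕ → L, StrictMono f)) :
    ∀ θ : L → L → Prop, IsPrimeCon θ ↔ IsMaxCon θ := by
  intro θ
  refine ⟨fun hθ => ?_, IsMaxCon.isPrimeCon⟩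
  have hprime := hθ.isPrimeCon_eq_conQuotient
  have hsurj := ConQuotient.mkHom_surjective hθ.1
  refine hθ.1.isMaxCon_of_isCongruenceSimple hθ.2.1 ?_
  rcases h with ⟨hfin, hmod⟩ | ⟨hrc, hacc⟩
  · have := hsurj.isModularLattice
    exact isCongruenceSimple_of_finite hasCollapseDescent_of_isModularLattice hprime
  · have := wellFoundedGT_of_not_exists_strictMono hacc
    have : WellFoundedGT (ConQuotient hθ.1) :=
      Function.Surjective.wellFoundedGT (f := (ConQuotient.mkHom hθ.1).toSupHom) hsurj
    exact (hsurj.isRelativelyComplemented hrc).isCongruenceSimple hprime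
end
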